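/- arXiv:1810.05254 — 3 statements merged into one kernel-verified Lean document; each statement's English description precedes it below -/
import Mathlib

section
/- Let K be a field of characteristic 0 and n ≥ 1. The n! left-normed multilinear monomials T_n = {(…((x_{σ(1)} x_{σ(2)}) x_{σ(3)})…) x_{σ(n)} : σ ∈ S_n} are linearly independent in the multilinear part P_n of the free assosymmetric algebra on x_1, …, x_n, and S_n acts on T_n simply transitively; consequently, the span K·T_n of T_n is isomorphic as a K[S_n]-module to the left regular module K[S_n] (the monoid algebra of S_n over K). -/
noncomputable section

/-- The associator `(x, y, z) = (xy)z - x(yz)`. -/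
def assoc' {R : Type*} [NonUnitalNonAssocRing R] (x y z : R) : R :=
  x * y * z - x * (y * z)

/-- The commutator `[x, y] = xy - yx`. -/
def brk {R : Type*} [NonUnitalNonAssocRing R] (x y : R) : R :=
  x * y - y * x

/-- Generators of the two-sided ideal of the assosymmetric relations in the free
nonunital nonassociative algebra: the elements `(a,b,c) - (a,c,b)` and `(a,b,c) - (b,a,c)`,
together with everything obtained from them by (iterated) left and right multiplications. -/
inductive IsAssosymRel (K : Type*) [Field K] (X : Type*) :
    FreeNonUnitalNonAssocAlgebra K X → Prop
  | rel₁ (a b c : FreeNonUnitalNonAssocAlgebra K X) :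
      IsAssosymRel K X (assoc' a b c - assoc' a c b)
  | rel₂ (a b c : FreeNonUnitalNonAssocAlgebra K X) :
      IsAssosymRel K X (assoc' a b c - assoc' b a c)
  | mul_left (r x : FreeNonUnitalNonAssocAlgebra K X) :
      IsAssosymRel K X x → IsAssosymRel K X (r * x)
  | mul_right (r x : FreeNonUnitalNonAssocAlgebra K X) :
      IsAssosymRel K X x → IsAssosymRel K X (x * r)

/-- The two-sided ideal of the assosymmetric relations, as a `K`-subspace of the free
nonunital nonassociative algebra. -/
def assosymIdeal (K : Type*) [Field K] (X : Type*) :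
    Submodule K (FreeNonUnitalNonAssocAlgebra K X) :=
  Submodule.span K {x | IsAssosymRel K X x}

/-- The free assosymmetric algebra on `X` (as a `K`-vector space): the quotient of the free
nonunital nonassociative algebra on `X` by the ideal of the assosymmetric relations. -/
abbrev FreeAssosym (K : Type*) [Field K] (X : Type*) :=
  FreeNonUnitalNonAssocAlgebra K X ⧸ assosymIdeal K X

/-- The image in the free assosymmetric algebra of the nonassociative monomial `w`. -/
def mkMono (K : Type*) [Field K] {X : Type*} (w : FreeMagma X) : FreeAssosym K X :=
  (assosymIdeal K X).mkQ (MonoidAlgebra.single w 1)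

/-- The list of variables (with multiplicities, in order) of a nonassociative monomial. -/
def FreeMagma.varList {X : Type*} : FreeMagma X → List X
  | FreeMagma.of x => [x]
  | FreeMagma.mul a b => a.varList ++ b.varList

/-- The multilinear part `P n`: the span of the images of the multilinear monomials
of degree `n` in the variables `x_0, …, x_{n-1}`. -/
def multilinearPart (K : Type*) [Field K] (n : ℕ) : Submodule K (FreeAssosym K (Fin n)) :=
  Submodule.span K
    {q | ∃ w : FreeMagma (Fin n), (∀ i, w.varList.count i = 1) ∧ q = mkMono K w}

/-- Relabelling of variables along `σ`, as a nonunital algebra endomorphism of the free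
nonunital nonassociative algebra. -/
def relabel (K : Type*) [Field K] {n : ℕ} (σ : Equiv.Perm (Fin n)) :
    FreeNonUnitalNonAssocAlgebra K (Fin n) →ₙₐ[K] FreeNonUnitalNonAssocAlgebra K (Fin n) :=
  MonoidAlgebra.mapDomainNonUnitalAlgHom K K (FreeMagma.map (⇑σ))

lemma relabel_isAssosymRel {K : Type*} [Field K] {n : ℕ} (σ : Equiv.Perm (Fin n))
    {x : FreeNonUnitalNonAssocAlgebra K (Fin n)} (hx : IsAssosymRel K (Fin n) x) :
    IsAssosymRel K (Fin n) (relabel K σ x) := by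
  induction hx with
  | rel₁ a b c =>
      simpa [assoc', map_sub, map_mul] using
        IsAssosymRel.rel₁ (relabel K σ a) (relabel K σ b) (relabel K σ c)
  | rel₂ a b c =>
      simpa [assoc', map_sub, map_mul] using
        IsAssosymRel.rel₂ (relabel K σ a) (relabel K σ b) (relabel K σ c)
  | mul_left r x _ ih =>
      simpa [map_mul] using IsAssosymRel.mul_left (relabel K σ r) _ ih
  | mul_right r x _ ih =>
      simpa [map_mul] using IsAssosymRel.mul_right (relabel K σ r) _ ih

/-- The relabelling along `σ`, as a `K`-linear endomorphism. -/
def relabelₗ (K : Type*) [Field K] {n : ℕ} (σ : Equiv.Perm (Fin n)) :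
    FreeNonUnitalNonAssocAlgebra K (Fin n) →ₗ[K] FreeNonUnitalNonAssocAlgebra K (Fin n) where
  toFun := relabel K σ
  map_add' := map_add _
  map_smul' := map_smul _

lemma assosymIdeal_le_comap (K : Type*) [Field K] {n : ℕ} (σ : Equiv.Perm (Fin n)) :
    assosymIdeal K (Fin n) ≤ (assosymIdeal K (Fin n)).comap (relabelₗ K σ) := by
  rw [← Submodule.map_le_iff_le_comap, assosymIdeal, Submodule.map_span]
  refine Submodule.span_le.2 ?_
  rintro _ ⟨x, hx, rfl⟩
  exact Submodule.subset_span (relabel_isAssosymRel σ hx)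

/-- The natural action of a permutation `σ` of the variables on the free assosymmetric
algebra (the map `x_i ↦ x_{σ(i)}`), as a `K`-linear endomorphism. -/
def permAct (K : Type*) [Field K] {n : ℕ} (σ : Equiv.Perm (Fin n)) :
    FreeAssosym K (Fin n) →ₗ[K] FreeAssosym K (Fin n) :=
  Submodule.mapQ _ _ (relabelₗ K σ) (assosymIdeal_le_comap K σ)

/-- The left-normed product of a list: `(…((x₁x₂)x₃)…)xₙ` (zero for the empty list). -/
def leftNormed {R : Type*} [NonUnitalNonAssocRing R] : List R → R
  | [] => 0
  | x :: xs => xs.foldl (· * ·) x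

/-- The left-normed multilinear monomial `(…((x_{σ(1)}x_{σ(2)})x_{σ(3)})…)x_{σ(n)}`. -/
def lnMono (K : Type*) [Field K] {n : ℕ} (σ : Equiv.Perm (Fin n)) :
    FreeNonUnitalNonAssocAlgebra K (Fin n) :=
  leftNormed ((List.finRange n).map fun i => FreeNonUnitalNonAssocAlgebra.of K (σ i))

/-- The set `T_n` of images of the left-normed multilinear monomials. -/
def TnSet (K : Type*) [Field K] (n : ℕ) : Set (FreeAssosym K (Fin n)) :=
  Set.range fun σ : Equiv.Perm (Fin n) => (assosymIdeal K (Fin n)).mkQ (lnMono K σ)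

/-- `[… [[(x₁,x₂,x₃),x₄],x₅] …, xₘ]`: nested commutators applied to an associator of the
first three entries of the list (zero if the list has fewer than three entries). -/
def nestedBrk {R : Type*} [NonUnitalNonAssocRing R] : List R → R
  | x :: y :: z :: rest => rest.foldl brk (assoc' x y z)
  | _ => 0

/-- The monomial of the second type:
`x_{σ(1)}(x_{σ(2)}(⋯ x_{σ(k)}[⋯[(x_{σ(k+1)},x_{σ(k+2)},x_{σ(k+3)}),x_{σ(k+4)}],…,x_{σ(n)}]⋯))`. -/
def mono₂ (K : Type*) [Field K] {n : ℕ} (σ : Equiv.Perm (Fin n)) (k : ℕ) :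
    FreeNonUnitalNonAssocAlgebra K (Fin n) :=
  (((List.finRange n).take k).map fun i => FreeNonUnitalNonAssocAlgebra.of K (σ i)).foldr
    (· * ·)
    (nestedBrk (((List.finRange n).drop k).map fun i => FreeNonUnitalNonAssocAlgebra.of K (σ i)))

/-- The set `T_{k,n-k}` of images of second-type monomials with increasing head and tail. -/
def TknSet (K : Type*) [Field K] (n k : ℕ) : Set (FreeAssosym K (Fin n)) :=
  {q | ∃ σ : Equiv.Perm (Fin n),
    StrictMonoOn (⇑σ) {i : Fin n | (i : ℕ) < k} ∧
    StrictMonoOn (⇑σ) {i : Fin n | k ≤ (i : ℕ)} ∧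
    q = (assosymIdeal K (Fin n)).mkQ (mono₂ K σ k)}

/-!
Every assignment of the variables in an associative algebra factors through the free
assosymmetric algebra, since all associators vanish there. In the free associative algebra
(the monoid algebra of the free monoid) the left-normed monomial of `σ` becomes the word
`x_{σ(1)} ⋯ x_{σ(n)}`; distinct permutations give distinct words, and words are linearly
independent, so the left-normed monomials are too. Relabelling sends the monomial of `τ` to
that of `ρ * τ`, which makes `T_n` a free orbit of `S_n` and `σ ↦ T_σ` an `S_n`-equivariant
basis of `K·T_n`.
-/

lemma leftNormed_eq_prod {R : Type*} [Ring R] {l : List R} (hl : l ≠ []) :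
    leftNormed l = l.prod := by
  obtain ⟨x, xs, rfl⟩ := List.exists_cons_of_ne_nil hl
  exact List.foldl_eq_apply_foldr

lemma map_leftNormed {A B F : Type*} [NonUnitalNonAssocRing A] [NonUnitalNonAssocRing B]
    [FunLike F A B] [MulHomClass F A B] [AddMonoidHomClass F A B] (f : F) (l : List A) :
    f (leftNormed l) = leftNormed (l.map f) := by
  cases l with
  | nil => exact map_zero f
  | cons x xs =>
    simp only [leftNormed, List.map_cons]
    induction xs generalizing x with
    | nil => rfl
    | cons y ys ih => simpa only [List.foldl_cons, List.map_cons, map_mul] using ih (x * y)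

section AssociativeQuotient

variable {K : Type*} [Field K] {X A : Type*} [Ring A] [Algebra K A]

lemma IsAssosymRel.map_eq_zero (f : FreeNonUnitalNonAssocAlgebra K X →ₙₐ[K] A)
    {x : FreeNonUnitalNonAssocAlgebra K X} (hx : IsAssosymRel K X x) : f x = 0 := by
  induction hx with
  | rel₁ | rel₂ => simp only [assoc', map_sub, map_mul, mul_assoc, sub_self]
  | mul_left r x _ ih => rw [map_mul, ih, mul_zero]
  | mul_right r x _ ih => rw [map_mul, ih, zero_mul]

lemma assosymIdeal_le_ker (f : FreeNonUnitalNonAssocAlgebra K X →ₙₐ[K] A) :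
    assosymIdeal K X ≤ LinearMap.ker (f : FreeNonUnitalNonAssocAlgebra K X →ₗ[K] A) :=
  Submodule.span_le.2 fun _ hx => hx.map_eq_zero f

variable (K) in
def FreeAssosym.liftAssoc (f : X → A) : FreeAssosym K X →ₗ[K] A :=
  (assosymIdeal K X).liftQ _ (assosymIdeal_le_ker (FreeNonUnitalNonAssocAlgebra.lift K f))

lemma FreeAssosym.liftAssoc_mkQ_leftNormed (f : X → A) {l : List X} (hl : l ≠ []) :
    liftAssoc K f
        ((assosymIdeal K X).mkQ (leftNormed (l.map (FreeNonUnitalNonAssocAlgebra.of K)))) =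
      (l.map f).prod := by
  change FreeNonUnitalNonAssocAlgebra.lift K f (leftNormed _) = _
  rw [map_leftNormed, List.map_map, leftNormed_eq_prod (by simpa using hl)]
  congr 1
  exact List.map_congr_left fun x _ => FreeNonUnitalNonAssocAlgebra.lift_of_apply K f x

end AssociativeQuotient

lemma FreeMonoid.prod_map_of_monoidAlgebra (K : Type*) [Field K] {X : Type*} (l : List X) :
    (l.map fun x => MonoidAlgebra.of K _ (FreeMonoid.of x)).prod =
      MonoidAlgebra.of K _ (FreeMonoid.ofList l) := by
  rw [← FreeMonoid.lift_ofList]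
  exact DFunLike.congr_fun (FreeMonoid.lift_restrict _) _

section LeftNormed

variable (K : Type*) [Field K] {n : ℕ}

lemma lnMono_eq (σ : Equiv.Perm (Fin n)) :
    lnMono K σ = leftNormed ((List.ofFn σ).map (FreeNonUnitalNonAssocAlgebra.of K)) := by
  rw [lnMono, List.ofFn_eq_map, List.map_map]
  rfl

lemma liftAssoc_mkQ_lnMono (hn : 1 ≤ n) (σ : Equiv.Perm (Fin n)) :
    FreeAssosym.liftAssoc K (fun i => MonoidAlgebra.of K _ (FreeMonoid.of i))
        ((assosymIdeal K (Fin n)).mkQ (lnMono K σ)) =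
      MonoidAlgebra.of K _ (FreeMonoid.ofList (List.ofFn σ)) := by
  have hne : List.ofFn σ ≠ [] := by simpa using Nat.one_le_iff_ne_zero.mp hn
  rw [lnMono_eq, FreeAssosym.liftAssoc_mkQ_leftNormed _ hne,
    FreeMonoid.prod_map_of_monoidAlgebra]

lemma lnMono_linearIndependent (hn : 1 ≤ n) :
    LinearIndependent K
      (fun σ : Equiv.Perm (Fin n) => (assosymIdeal K (Fin n)).mkQ (lnMono K σ)) := by
  have hword : Function.Injective fun σ : Equiv.Perm (Fin n) => FreeMonoid.ofList (List.ofFn σ) :=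
    FreeMonoid.ofList.injective.comp (List.ofFn_injective.comp DFunLike.coe_injective)
  refine LinearIndependent.of_comp
    (FreeAssosym.liftAssoc K fun i => MonoidAlgebra.of K _ (FreeMonoid.of i)) ?_
  have hcomp : FreeAssosym.liftAssoc K (fun i => MonoidAlgebra.of K _ (FreeMonoid.of i)) ∘
      (fun σ : Equiv.Perm (Fin n) => (assosymIdeal K (Fin n)).mkQ (lnMono K σ)) =
      MonoidAlgebra.basis (FreeMonoid (Fin n)) K ∘
        fun σ : Equiv.Perm (Fin n) => FreeMonoid.ofList (List.ofFn σ) := by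
    funext σ
    simp only [Function.comp_apply, liftAssoc_mkQ_lnMono K hn, MonoidAlgebra.basis_apply]
    rfl
  rw [hcomp]
  exact (MonoidAlgebra.basis _ K).linearIndependent.comp _ hword

lemma relabel_of (σ : Equiv.Perm (Fin n)) (i : Fin n) :
    relabel K σ (FreeNonUnitalNonAssocAlgebra.of K i) = FreeNonUnitalNonAssocAlgebra.of K (σ i) :=
  MonoidAlgebra.mapDomain_single

lemma permAct_mkQ_lnMono (ρ τ : Equiv.Perm (Fin n)) :
    permAct K ρ ((assosymIdeal K (Fin n)).mkQ (lnMono K τ)) =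
      (assosymIdeal K (Fin n)).mkQ (lnMono K (ρ * τ)) := by
  refine (Submodule.mapQ_apply _ _ _ _).trans (congrArg _ ?_)
  change relabel K ρ (lnMono K τ) = _
  rw [lnMono_eq, lnMono_eq, map_leftNormed, List.map_map]
  simp [List.map_ofFn, Function.comp_def, relabel_of]

end LeftNormed

lemma existsUnique_smul_eq_of_injective_equivariant {G M : Type*} [Group G] {act : G → M → M}
    {v : G → M} (hv : Function.Injective v) (hact : ∀ ρ τ, act ρ (v τ) = v (ρ * τ)) :
    ∀ t₁ ∈ Set.range v, ∀ t₂ ∈ Set.range v, ∃! σ, act σ t₁ = t₂ := by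
  rintro _ ⟨τ₁, rfl⟩ _ ⟨τ₂, rfl⟩
  refine ⟨τ₂ * τ₁⁻¹, ?_, fun σ hσ => eq_mul_inv_of_mul_eq (hv ((hact σ τ₁).symm.trans hσ))⟩
  simp only [hact, inv_mul_cancel_right]

lemma LinearIndependent.exists_monoidAlgebra_equiv_span {R G M : Type*} [Semiring R] [Mul G]
    [AddCommMonoid M] [Module R M] {v : G → M} (hv : LinearIndependent R v)
    (act : G → M →ₗ[R] M) (hact : ∀ ρ τ, act ρ (v τ) = v (ρ * τ)) :
    ∃ e : MonoidAlgebra R G ≃ₗ[R] Submodule.span R (Set.range v),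
      ∀ ρ x, (e (MonoidAlgebra.single ρ 1 * x) : M) = act ρ (e x) := by
  refine ⟨(MonoidAlgebra.coeffLinearEquiv R).trans hv.linearCombinationEquiv, fun ρ x => ?_⟩
  induction x using MonoidAlgebra.induction_linear with
  | zero => simp
  | add x y hx hy => simp only [mul_add, map_add, Submodule.coe_add, hx, hy]
  | single τ c =>
    simp [MonoidAlgebra.single_mul_single, Finsupp.linearCombination_single, hact]

theorem span_Tn_regular_module_general (K : Type*) [Field K] (n : ℕ) (hn : 1 ≤ n) :
    LinearIndependent K
      (fun σ : Equiv.Perm (Fin n) => (assosymIdeal K (Fin n)).mkQ (lnMono K σ)) ∧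
    (∀ t₁ ∈ TnSet K n, ∀ t₂ ∈ TnSet K n, ∃! σ : Equiv.Perm (Fin n), permAct K σ t₁ = t₂) ∧
    ∃ e : MonoidAlgebra K (Equiv.Perm (Fin n)) ≃ₗ[K] Submodule.span K (TnSet K n),
      ∀ (ρ : Equiv.Perm (Fin n)) (x : MonoidAlgebra K (Equiv.Perm (Fin n))),
        ((e (MonoidAlgebra.single ρ 1 * x) : FreeAssosym K (Fin n))) =
          permAct K ρ (e x : FreeAssosym K (Fin n)) := by
  have hli := lnMono_linearIndependent K hn
  exact ⟨hli,
    existsUnique_smul_eq_of_injective_equivariant hli.injective (permAct_mkQ_lnMono K),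
    hli.exists_monoidAlgebra_equiv_span (permAct K) (permAct_mkQ_lnMono K)⟩

/-- The `n!` left-normed multilinear monomials are linearly independent in the multilinear
part of the free assosymmetric algebra, the symmetric group acts simply transitively on
them, and consequently their span `K·T_n` is isomorphic, as a module over the group algebra
`K[S_n]`, to the left regular module `K[S_n]`: there is a `K`-linear equivalence from
`K[S_n]` to `K·T_n` intertwining left multiplication with the variable-permuting action. -/
theorem span_Tn_regular_module (K : Type*) [Field K] [CharZero K] (n : ℕ) (hn : 1 ≤ n) :
    LinearIndependent K
      (fun σ : Equiv.Perm (Fin n) => (assosymIdeal K (Fin n)).mkQ (lnMono K σ)) ∧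
    (∀ t₁ ∈ TnSet K n, ∀ t₂ ∈ TnSet K n, ∃! σ : Equiv.Perm (Fin n), permAct K σ t₁ = t₂) ∧
    ∃ e : MonoidAlgebra K (Equiv.Perm (Fin n)) ≃ₗ[K] Submodule.span K (TnSet K n),
      ∀ (ρ : Equiv.Perm (Fin n)) (x : MonoidAlgebra K (Equiv.Perm (Fin n))),
        ((e (MonoidAlgebra.single ρ 1 * x) : FreeAssosym K (Fin n))) =
          permAct K ρ (e x : FreeAssosym K (Fin n)) :=
  span_Tn_regular_module_general K n hn

end
end

section
/- Let K be a field of characteristic 0, n ≥ 3 and 0 ≤ k ≤ n−3. The set T_{k,n−k} ⊆ P_n has exactly binom(n, k) elements and these elements are linearly independent over K; hence the span K·T_{k,n−k} has dimension binom(n, k). -/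
noncomputable section

/-!
The elements of `T_{k,n-k}` are separated by a concrete assosymmetric algebra. For an augmented
commutative algebra `(R, ε)` the pairs `(p, q)` with product
`(p, q) (p', q') = (p p', p q' + ε(p') q - p̄ p̄')`, where `p̄ = p - ε(p)`, form an assosymmetric
algebra: every associator is `(0, p̄ p̄' p̄'')`. Take for `R` the functions on the subsets `T` of
`{1, …, n}`, for `ε` the evaluation at the full set, and send `x_i` to `(χ_i, 0)` with
`χ_i(T) = [i ∈ T]`. Then the element of `T_{k,n-k}` with head set `S` goes to `(0, f_S)`, where
`f_S(T) = ∏_{i ∈ S} χ_i(T) · ∏_{j ∉ S} (χ_j(T) - 1) · (-1)^{n-k-3}` vanishes unless `S ⊆ T` and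
`f_S(S) = -1`. Among `k`-subsets this is a diagonal pattern, hence linear independence. Finally a
`(k, n-k)`-shuffle is determined by its head set, so `T_{k,n-k}` is indexed by the `k`-subsets.
-/

lemma List.mem_take_finRange {n k : ℕ} {i : Fin n} :
    i ∈ (List.finRange n).take k ↔ (i : ℕ) < k := by
  simp [List.mem_take_iff_getElem, Fin.ext_iff]

lemma List.le_of_mem_drop_finRange {n k : ℕ} {i : Fin n} (h : i ∈ (List.finRange n).drop k) :
    k ≤ (i : ℕ) := by
  obtain ⟨j, hj, rfl⟩ := List.mem_drop_iff_getElem.1 h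
  simp

theorem StrictMonoOn.eqOn_of_image_eq {α β : Type*} [LinearOrder α] [WellFoundedLT α]
    [Preorder β] {f g : α → β} {s : Set α} (hf : StrictMonoOn f s) (hg : StrictMonoOn g s)
    (h : f '' s = g '' s) : Set.EqOn f g s := by
  have := (hf.domRestrict.range_inj hg.domRestrict).1 (by simpa [Set.range_domRestrict] using h)
  exact fun x hx => congrFun this ⟨x, hx⟩

theorem linearIndependent_of_apply_eq_zero_of_ne {K ι α : Type*} [Field K] {v : ι → α → K}
    (x : ι → α) (hdiag : ∀ i, v i (x i) ≠ 0) (hoff : ∀ i j, i ≠ j → v i (x j) = 0) :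
    LinearIndependent K v := by
  rw [linearIndependent_iff']
  intro s g hsum i hi
  have h := congrFun hsum (x i)
  simp only [Finset.sum_apply, Pi.smul_apply, smul_eq_mul, Pi.zero_apply] at h
  rw [Finset.sum_eq_single i (fun j _ hji => by rw [hoff j i hji, mul_zero])
    (fun h' => absurd hi h')] at h
  exact (mul_eq_zero.1 h).resolve_right (hdiag i)

lemma map_foldr_mul {F A B : Type*} [Mul A] [Mul B] [FunLike F A B] [MulHomClass F A B]
    (f : F) (l : List A) (x : A) :
    f (l.foldr (· * ·) x) = (l.map f).foldr (· * ·) (f x) := by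
  induction l with
  | nil => rfl
  | cons a l ih => simp [ih]

section Hom

variable {F A B : Type*} [NonUnitalNonAssocRing A] [NonUnitalNonAssocRing B] [FunLike F A B]
  [NonUnitalRingHomClass F A B]

lemma map_assoc' (f : F) (a b c : A) : f (assoc' a b c) = assoc' (f a) (f b) (f c) := by
  simp [assoc']

lemma map_foldl_brk (f : F) (l : List A) (x : A) :
    f (l.foldl brk x) = (l.map f).foldl brk (f x) := by
  induction l generalizing x with
  | nil => rfl
  | cons a l ih => simp [ih, brk]

lemma map_nestedBrk (f : F) (l : List A) : f (nestedBrk l) = nestedBrk (l.map f) := by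
  match l with
  | [] | [_] | [_, _] => exact map_zero f
  | a :: b :: c :: rest => simp [nestedBrk, map_foldl_brk, map_assoc']

end Hom

lemma IsAssosymRel.map_eq_zero_s12 {K X A F : Type*} [Field K] [NonUnitalNonAssocRing A]
    [FunLike F (FreeNonUnitalNonAssocAlgebra K X) A]
    [NonUnitalRingHomClass F (FreeNonUnitalNonAssocAlgebra K X) A]
    (h₂₃ : ∀ a b c : A, assoc' a b c = assoc' a c b)
    (h₁₂ : ∀ a b c : A, assoc' a b c = assoc' b a c) (f : F)
    {x : FreeNonUnitalNonAssocAlgebra K X} (hx : IsAssosymRel K X x) : f x = 0 := by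
  induction hx with
  | rel₁ a b c => rw [map_sub, map_assoc', map_assoc', h₂₃, sub_self]
  | rel₂ a b c => rw [map_sub, map_assoc', map_assoc', h₁₂, sub_self]
  | mul_left r x _ ih => rw [map_mul, ih, mul_zero]
  | mul_right r x _ ih => rw [map_mul, ih, zero_mul]

section Lift

variable {K X A : Type*} [Field K] [NonUnitalNonAssocRing A] [Module K A]
  [IsScalarTower K A A] [SMulCommClass K A A]

def FreeAssosym.lift (h₂₃ : ∀ a b c : A, assoc' a b c = assoc' a c b)
    (h₁₂ : ∀ a b c : A, assoc' a b c = assoc' b a c) (f : X → A) :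
    FreeAssosym K X →ₗ[K] A :=
  (assosymIdeal K X).liftQ
    (FreeNonUnitalNonAssocAlgebra.lift K f : FreeNonUnitalNonAssocAlgebra K X →ₗ[K] A) <|
    Submodule.span_le.2 fun _ hx =>
      IsAssosymRel.map_eq_zero_s12 h₂₃ h₁₂ (FreeNonUnitalNonAssocAlgebra.lift K f) hx

lemma FreeAssosym.lift_mkQ (h₂₃ : ∀ a b c : A, assoc' a b c = assoc' a c b)
    (h₁₂ : ∀ a b c : A, assoc' a b c = assoc' b a c) (f : X → A)
    (x : FreeNonUnitalNonAssocAlgebra K X) :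
    FreeAssosym.lift h₂₃ h₁₂ f ((assosymIdeal K X).mkQ x) =
      FreeNonUnitalNonAssocAlgebra.lift K f x :=
  rfl

end Lift

section

variable {K R : Type*} [CommRing K] [CommRing R] [Algebra K R]

def augPart (ε : R →ₐ[K] K) (p : R) : R := p - algebraMap K R (ε p)

def AugAssosym (_ : R →ₐ[K] K) : Type _ := R × R

namespace AugAssosym

variable (ε : R →ₐ[K] K)

instance : AddCommGroup (AugAssosym ε) := inferInstanceAs (AddCommGroup (R × R))
instance : Module K (AugAssosym ε) := inferInstanceAs (Module K (R × R))

instance : Mul (AugAssosym ε) where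
  mul x y := (x.1 * y.1, x.1 * y.2 + ε y.1 • x.2 - augPart ε x.1 * augPart ε y.1)

def inl (p : R) : AugAssosym ε := (p, 0)

def inr (q : R) : AugAssosym ε := (0, q)

def sndₗ : AugAssosym ε →ₗ[K] R := LinearMap.snd K R R

variable {ε}

@[ext] lemma ext {x y : AugAssosym ε} (h₁ : x.1 = y.1) (h₂ : x.2 = y.2) : x = y :=
  Prod.ext h₁ h₂

@[simp] lemma fst_zero : (0 : AugAssosym ε).1 = 0 := rfl
@[simp] lemma snd_zero : (0 : AugAssosym ε).2 = 0 := rfl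
@[simp] lemma fst_add (x y : AugAssosym ε) : (x + y).1 = x.1 + y.1 := rfl
@[simp] lemma snd_add (x y : AugAssosym ε) : (x + y).2 = x.2 + y.2 := rfl
@[simp] lemma fst_sub (x y : AugAssosym ε) : (x - y).1 = x.1 - y.1 := rfl
@[simp] lemma snd_sub (x y : AugAssosym ε) : (x - y).2 = x.2 - y.2 := rfl
@[simp] lemma fst_smul (c : K) (x : AugAssosym ε) : (c • x).1 = c • x.1 := rfl
@[simp] lemma snd_smul (c : K) (x : AugAssosym ε) : (c • x).2 = c • x.2 := rfl
@[simp] lemma fst_mul (x y : AugAssosym ε) : (x * y).1 = x.1 * y.1 := rfl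
@[simp] lemma snd_mul (x y : AugAssosym ε) :
    (x * y).2 = x.1 * y.2 + ε y.1 • x.2 - augPart ε x.1 * augPart ε y.1 := rfl
@[simp] lemma fst_inl (p : R) : (inl ε p).1 = p := rfl
@[simp] lemma snd_inl (p : R) : (inl ε p).2 = 0 := rfl
@[simp] lemma fst_inr (q : R) : (inr ε q).1 = 0 := rfl
@[simp] lemma snd_inr (q : R) : (inr ε q).2 = q := rfl
@[simp] lemma sndₗ_apply (x : AugAssosym ε) : sndₗ ε x = x.2 := rfl

instance : NonUnitalNonAssocRing (AugAssosym ε) where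
  left_distrib x y z := by ext <;> simp [augPart, Algebra.smul_def] <;> ring
  right_distrib x y z := by ext <;> simp [augPart, Algebra.smul_def] <;> ring
  zero_mul x := by ext <;> simp [augPart]
  mul_zero x := by ext <;> simp [augPart]

instance : IsScalarTower K (AugAssosym ε) (AugAssosym ε) where
  smul_assoc c x y := by ext <;> simp [augPart, Algebra.smul_def] <;> ring

instance : SMulCommClass K (AugAssosym ε) (AugAssosym ε) where
  smul_comm c x y := by ext <;> simp [augPart, Algebra.smul_def] <;> ring

lemma assoc'_eq (x y z : AugAssosym ε) :
    assoc' x y z = inr ε (augPart ε x.1 * augPart ε y.1 * augPart ε z.1) := by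
  ext <;> simp [assoc', augPart, Algebra.smul_def] <;> ring

lemma assoc'_comm₂₃ (x y z : AugAssosym ε) : assoc' x y z = assoc' x z y := by
  rw [assoc'_eq, assoc'_eq, mul_right_comm]

lemma assoc'_comm₁₂ (x y z : AugAssosym ε) : assoc' x y z = assoc' y x z := by
  rw [assoc'_eq, assoc'_eq, mul_comm (augPart ε x.1)]

lemma inl_mul_inr (p q : R) : inl ε p * inr ε q = inr ε (p * q) := by
  ext <;> simp [augPart]

lemma brk_inr_inl (q p : R) : brk (inr ε q) (inl ε p) = inr ε (-augPart ε p * q) := by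
  ext
  · simp [brk]
  · simp [brk, augPart, Algebra.smul_def]; ring

lemma foldr_mul_inr (l : List R) (q : R) :
    (l.map (inl ε)).foldr (· * ·) (inr ε q) = inr ε (l.prod * q) := by
  induction l with
  | nil => simp
  | cons p l ih => simp [ih, inl_mul_inr, mul_assoc]

lemma foldl_brk_inr (l : List R) (q : R) :
    (l.map (inl ε)).foldl brk (inr ε q) = inr ε ((l.map fun p => -augPart ε p).prod * q) := by
  induction l generalizing q with
  | nil => simp
  | cons p l ih => simp [ih, brk_inr_inl, mul_assoc, mul_left_comm]

variable (ε) in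
def nestedBrkCoeff : List R → R
  | a :: b :: c :: rest =>
      (rest.map fun p => -augPart ε p).prod * (augPart ε a * augPart ε b * augPart ε c)
  | _ => 0

lemma nestedBrk_map_inl (l : List R) :
    nestedBrk (l.map (inl ε)) = inr ε (nestedBrkCoeff ε l) := by
  match l with
  | [] | [_] | [_, _] => ext <;> rfl
  | a :: b :: c :: rest => simp [nestedBrk, nestedBrkCoeff, assoc'_eq, foldl_brk_inr]

end AugAssosym

end

section Shuffle

variable {n k : ℕ}

def IsShuffle (k : ℕ) (σ : Equiv.Perm (Fin n)) : Prop :=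
  StrictMonoOn σ {i | (i : ℕ) < k} ∧ StrictMonoOn σ {i | k ≤ (i : ℕ)}

def headSet (k : ℕ) (σ : Equiv.Perm (Fin n)) : Finset (Fin n) :=
  (Finset.univ.filter fun i : Fin n => (i : ℕ) < k).map σ.toEmbedding

lemma coe_headSet (k : ℕ) (σ : Equiv.Perm (Fin n)) :
    (headSet k σ : Set (Fin n)) = σ '' {i | (i : ℕ) < k} := by
  simp [headSet]

lemma mem_headSet (σ : Equiv.Perm (Fin n)) (j : Fin n) :
    j ∈ headSet k σ ↔ (σ.symm j : ℕ) < k := by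
  simp [headSet]

lemma apply_mem_headSet (σ : Equiv.Perm (Fin n)) (i : Fin n) :
    σ i ∈ headSet k σ ↔ (i : ℕ) < k := by
  simp [mem_headSet]

lemma card_headSet (hkn : k ≤ n) (σ : Equiv.Perm (Fin n)) : (headSet k σ).card = k := by
  simp [headSet, Fin.card_filter_val_lt, hkn]

lemma IsShuffle.eq_of_headSet_eq {σ τ : Equiv.Perm (Fin n)} (hσ : IsShuffle k σ)
    (hτ : IsShuffle k τ) (h : headSet k σ = headSet k τ) : σ = τ := by
  have head : σ '' {i | (i : ℕ) < k} = τ '' {i | (i : ℕ) < k} := by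
    simpa only [coe_headSet] using congrArg ((↑) : Finset (Fin n) → Set (Fin n)) h
  have tail : σ '' {i | k ≤ (i : ℕ)} = τ '' {i | k ≤ (i : ℕ)} := by
    have : {i : Fin n | k ≤ (i : ℕ)} = {i : Fin n | (i : ℕ) < k}ᶜ := by ext; simp
    rw [this, Set.image_compl_eq σ.bijective, Set.image_compl_eq τ.bijective, head]
  ext i
  rcases lt_or_ge (i : ℕ) k with hi | hi
  · rw [hσ.1.eqOn_of_image_eq hτ.1 head hi]
  · rw [hσ.2.eqOn_of_image_eq hτ.2 tail hi]

lemma exists_isShuffle_headSet_eq (hkn : k ≤ n) {S : Finset (Fin n)} (hS : S.card = k) :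
    ∃ σ, IsShuffle k σ ∧ headSet k σ = S := by
  have hSc : Sᶜ.card = n - k := by rw [Finset.card_compl, Fintype.card_fin, hS]
  let σ : Equiv.Perm (Fin n) := (finCongr (Nat.add_sub_cancel' hkn).symm).trans
    (finSumFinEquiv.symm.trans (finSumEquivOfFinset hS hSc))
  have σ_head (i : Fin n) (hi : (i : ℕ) < k) : σ i = S.orderEmbOfFin hS ⟨i, hi⟩ := by
    have : Fin.cast (Nat.add_sub_cancel' hkn).symm i = Fin.castAdd (n - k) ⟨i, hi⟩ := rfl
    simp only [σ, Equiv.trans_apply, finCongr_apply, this, finSumFinEquiv_symm_apply_castAdd,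
      finSumEquivOfFinset_inl]
  have σ_tail (i : Fin n) (hi : k ≤ (i : ℕ)) :
      σ i = Sᶜ.orderEmbOfFin hSc ⟨i - k, by omega⟩ := by
    have : Fin.cast (Nat.add_sub_cancel' hkn).symm i = Fin.natAdd k ⟨i - k, by omega⟩ :=
      Fin.ext (by simp; omega)
    simp only [σ, Equiv.trans_apply, finCongr_apply, this, finSumFinEquiv_symm_apply_natAdd,
      finSumEquivOfFinset_inr]
  refine ⟨σ, ⟨fun i hi j hj hij => ?_, fun i hi j hj hij => ?_⟩, ?_⟩
  · rw [σ_head i hi, σ_head j hj]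
    exact (S.orderEmbOfFin hS).strictMono hij
  · rw [σ_tail i hi, σ_tail j hj]
    exact (Sᶜ.orderEmbOfFin hSc).strictMono (Fin.mk_lt_mk.2 (by simp at hi hj; omega))
  · refine Finset.eq_of_subset_of_card_le (fun x hx => ?_) (by rw [hS, card_headSet hkn])
    obtain ⟨i, hi, rfl⟩ := Finset.mem_map.1 hx
    simp only [Finset.mem_filter] at hi
    simp [σ_head i hi.2]

end Shuffle

section SubsetEvaluation

open AugAssosym

variable (K : Type*) [Field K] {n : ℕ}

def memIndicator (i : Fin n) : Finset (Fin n) → K := fun T => if i ∈ T then 1 else 0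

abbrev univEval : (Finset (Fin n) → K) →ₐ[K] K := Pi.evalAlgHom K (fun _ => K) Finset.univ

def evalSubsets : FreeAssosym K (Fin n) →ₗ[K] (Finset (Fin n) → K) :=
  sndₗ (univEval K) ∘ₗ FreeAssosym.lift assoc'_comm₂₃ assoc'_comm₁₂
    fun i => inl (univEval K) (memIndicator K i)

lemma evalSubsets_mono₂ (σ : Equiv.Perm (Fin n)) (k : ℕ) :
    evalSubsets K ((assosymIdeal K (Fin n)).mkQ (mono₂ K σ k)) =
      (((List.finRange n).take k).map (memIndicator K ∘ σ)).prod *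
        nestedBrkCoeff (univEval K) (((List.finRange n).drop k).map (memIndicator K ∘ σ)) := by
  have hmap (l : List (Fin n)) :
      l.map (FreeNonUnitalNonAssocAlgebra.lift K (fun i => inl (univEval K) (memIndicator K i)) ∘
        fun i => FreeNonUnitalNonAssocAlgebra.of K (σ i)) =
      (l.map (memIndicator K ∘ σ)).map (inl (univEval K)) := by
    simp [Function.comp_def]
  simp only [evalSubsets, LinearMap.comp_apply, FreeAssosym.lift_mkQ, mono₂, map_foldr_mul,
    map_nestedBrk, List.map_map]
  rw [hmap, hmap, nestedBrk_map_inl, foldr_mul_inr]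
  rfl

variable {K} {k : ℕ}

lemma augPart_memIndicator_apply (i : Fin n) (T : Finset (Fin n)) :
    augPart (univEval K) (memIndicator K i) T = if i ∈ T then 0 else -1 := by
  by_cases h : i ∈ T <;> simp [augPart, memIndicator, h]

lemma nestedBrkCoeff_memIndicator_apply {l : List (Fin n)} (hl : 3 ≤ l.length)
    {T : Finset (Fin n)} (hT : ∀ j ∈ l, j ∉ T) :
    nestedBrkCoeff (univEval K) (l.map (memIndicator K)) T = -1 := by
  match l, hl with
  | a :: b :: c :: rest, _ =>
    have hrest : (rest.map fun j => -augPart (univEval K) (memIndicator K j)).prod T = 1 := by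
      rw [Pi.list_prod_apply]
      refine List.prod_eq_one fun _ hx => ?_
      simp only [List.map_map, List.mem_map, Function.comp_apply] at hx
      obtain ⟨j, hj, rfl⟩ := hx
      simp [augPart_memIndicator_apply, hT j (by simp [hj])]
    simp [nestedBrkCoeff, Function.comp_def, hrest, augPart_memIndicator_apply, hT]

lemma evalSubsets_mono₂_apply_of_not_subset (σ : Equiv.Perm (Fin n)) {T : Finset (Fin n)}
    (hT : ¬ headSet k σ ⊆ T) :
    evalSubsets K ((assosymIdeal K (Fin n)).mkQ (mono₂ K σ k)) T = 0 := by
  obtain ⟨j, hj, hjT⟩ := Finset.not_subset.1 hT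
  rw [evalSubsets_mono₂, Pi.mul_apply, Pi.list_prod_apply, List.prod_eq_zero, zero_mul]
  simp only [List.map_map, List.mem_map, Function.comp_apply]
  refine ⟨σ.symm j, ?_, by simp [memIndicator, hjT]⟩
  simpa [List.mem_take_finRange, mem_headSet] using hj

lemma evalSubsets_mono₂_apply_headSet (hkn : k + 3 ≤ n) (σ : Equiv.Perm (Fin n)) :
    evalSubsets K ((assosymIdeal K (Fin n)).mkQ (mono₂ K σ k)) (headSet k σ) = -1 := by
  have head :
      (((List.finRange n).take k).map (memIndicator K ∘ σ)).prod (headSet k σ) = 1 := by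
    rw [Pi.list_prod_apply]
    refine List.prod_eq_one fun _ hx => ?_
    simp only [List.map_map, List.mem_map, Function.comp_apply] at hx
    obtain ⟨i, hi, rfl⟩ := hx
    simp [memIndicator, apply_mem_headSet, List.mem_take_finRange.1 hi]
  have tail := nestedBrkCoeff_memIndicator_apply (K := K)
    (l := ((List.finRange n).drop k).map σ) (T := headSet k σ) (by simp; omega) (by
      simp only [List.mem_map]
      rintro _ ⟨i, hi, rfl⟩
      simpa [apply_mem_headSet] using List.le_of_mem_drop_finRange hi)
  rw [evalSubsets_mono₂, Pi.mul_apply, head, one_mul, ← List.map_map, tail]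

end SubsetEvaluation

lemma card_isShuffle {n k : ℕ} (hkn : k ≤ n) :
    Nat.card {σ : Equiv.Perm (Fin n) // IsShuffle k σ} = n.choose k := by
  have hbij : Function.Bijective fun σ : {σ : Equiv.Perm (Fin n) // IsShuffle k σ} =>
      (⟨headSet k σ.1, card_headSet hkn σ.1⟩ : {S : Finset (Fin n) // S.card = k}) := by
    refine ⟨fun σ τ h => Subtype.ext (σ.2.eq_of_headSet_eq τ.2 (congrArg Subtype.val h)),
      fun S => ?_⟩
    obtain ⟨σ, hσ, hS⟩ := exists_isShuffle_headSet_eq hkn S.2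
    exact ⟨⟨σ, hσ⟩, Subtype.ext hS⟩
  rw [Nat.card_eq_of_bijective _ hbij, Nat.card_eq_fintype_card, Fintype.card_finset_len,
    Fintype.card_fin]

lemma linearIndependent_mkQ_mono₂ (K : Type*) [Field K] {n k : ℕ} (hkn : k + 3 ≤ n) :
    LinearIndependent K fun σ : {σ : Equiv.Perm (Fin n) // IsShuffle k σ} =>
      (assosymIdeal K (Fin n)).mkQ (mono₂ K σ k) := by
  refine .of_comp (evalSubsets K) <|
    linearIndependent_of_apply_eq_zero_of_ne (fun σ => headSet k σ.1) (fun σ => ?_)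
      fun σ τ hne => evalSubsets_mono₂_apply_of_not_subset _ fun hsub => hne ?_
  · rw [Function.comp_apply, evalSubsets_mono₂_apply_headSet hkn]
    exact neg_ne_zero.2 one_ne_zero
  · refine Subtype.ext (σ.2.eq_of_headSet_eq τ.2 (Finset.eq_of_subset_of_card_le hsub ?_))
    rw [card_headSet (by omega), card_headSet (by omega)]

theorem card_and_finrank_Tkn_general (K : Type*) [Field K] (n k : ℕ)
    (hn : 3 ≤ n) (hk : k ≤ n - 3) :
    Nat.card (TknSet K n k) = n.choose k ∧
    LinearIndependent K (fun t : TknSet K n k => (t : FreeAssosym K (Fin n))) ∧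
    Module.finrank K (Submodule.span K (TknSet K n k)) = n.choose k := by
  have hkn : k + 3 ≤ n := by omega
  have hT : TknSet K n k = Set.range fun σ : {σ : Equiv.Perm (Fin n) // IsShuffle k σ} =>
      (assosymIdeal K (Fin n)).mkQ (mono₂ K σ k) := by
    ext q
    simp [TknSet, IsShuffle, eq_comm, and_assoc]
  have hli := linearIndependent_mkQ_mono₂ K hkn
  have hcard := card_isShuffle (n := n) (k := k) (by omega)
  refine ⟨?_, ?_, ?_⟩
  · rw [hT, Nat.card_range_of_injective hli.injective, hcard]
  · rw [hT]
    exact hli.linearIndepOn_id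
  · classical
    rw [hT, finrank_span_eq_card hli, ← Nat.card_eq_fintype_card, hcard]

/-- For `0 ≤ k ≤ n - 3`, the set `T_{k,n-k}` has exactly `C(n, k)` elements, these elements
are linearly independent over `K`, and hence the span `K·T_{k,n-k}` has dimension `C(n, k)`. -/
theorem card_and_finrank_Tkn (K : Type*) [Field K] [CharZero K] (n k : ℕ)
    (hn : 3 ≤ n) (hk : k ≤ n - 3) :
    Nat.card (TknSet K n k) = n.choose k ∧
    LinearIndependent K (fun t : TknSet K n k => (t : FreeAssosym K (Fin n))) ∧
    Module.finrank K (Submodule.span K (TknSet K n k)) = n.choose k :=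
  card_and_finrank_Tkn_general K n k hn hk
end
end

section
/- Let R be an assosymmetric algebra over a field K of characteristic 0, let n ≥ 3, and let a_1, …, a_n ∈ R. Then the element [⋯[[(a_1, a_2, a_3), a_4], a_5], …, a_n] is invariant under every permutation of a_1, …, a_n: for every σ ∈ S_n, [⋯[[(a_{σ(1)}, a_{σ(2)}, a_{σ(3)}), a_{σ(4)}], a_{σ(5)}], …, a_{σ(n)}] = [⋯[[(a_1, a_2, a_3), a_4], a_5], …, a_n]. -/
noncomputable section

/-- An algebra is assosymmetric if `(a,b,c) = (a,c,b) = (b,a,c)` for all `a`, `b`, `c`. -/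
class IsAssosymmetric (R : Type*) [NonUnitalNonAssocRing R] : Prop where
  assoc_swap_right : ∀ a b c : R, assoc' a b c = assoc' a c b
  assoc_swap_left : ∀ a b c : R, assoc' a b c = assoc' b a c

/-! In an assosymmetric algebra the associator is totally symmetric. Subtracting two instances
of the Teichmüller identity `(xy,z,w) - (x,yz,w) + (x,y,zw) = x(y,z,w) + (x,y,z)w` gives linear
relations between the elements `([x,y],z,w)` and `[x,(y,z,w)]`; solving them (which divides by
`4`) gives `([x,y],z,w) = 0` and `[(x,y,z),w] = [(x,y,w),z]`. In particular associators commute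
with all commutators. The Jacobi identity holds, since the Jacobian is the alternating sum of
associators, and it shows that commuting with all commutators passes from `u` to `[u,x]` and
makes `[[u,x],y]` symmetric in `x, y`. So every adjacent transposition fixes the nested
commutator, and these transpositions generate the symmetric group. -/

section

variable {R : Type*} [NonUnitalNonAssocRing R]

lemma assoc'_sub_left (x y z w : R) : assoc' (x - y) z w = assoc' x z w - assoc' y z w := by
  simp only [assoc', sub_mul]; abel

lemma assoc'_teichmuller (x y z w : R) :
    assoc' (x * y) z w - assoc' x (y * z) w + assoc' x y (z * w) =
      x * assoc' y z w + assoc' x y z * w := by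
  simp only [assoc', mul_sub, sub_mul]; abel

lemma brk_jacobi_eq_alternating_assoc' (x y z : R) :
    brk (brk x y) z + brk (brk y z) x + brk (brk z x) y =
      assoc' x y z - assoc' x z y + assoc' y z x - assoc' y x z + assoc' z x y - assoc' z y x := by
  simp only [assoc', brk, mul_sub, sub_mul]; abel

def IsBrkCentral (w : R) : Prop := ∀ u v : R, brk w (brk u v) = 0

variable [IsAssosymmetric R]

open IsAssosymmetric

lemma brk_jacobi (x y z : R) : brk (brk x y) z + brk (brk y z) x + brk (brk z x) y = 0 := by
  rw [brk_jacobi_eq_alternating_assoc']; simp only [assoc_swap_left, assoc_swap_right]; abel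

lemma IsBrkCentral.brk_brk_comm {w : R} (hw : IsBrkCentral w) (x y : R) :
    brk (brk w x) y = brk (brk w y) x := by
  have h := brk_jacobi w x y
  have hxy := hw x y
  simp only [brk, mul_sub, sub_mul] at h hxy ⊢
  linear_combination (norm := abel) h + hxy

lemma IsBrkCentral.isBrkCentral_brk {w : R} (hw : IsBrkCentral w) (x : R) :
    IsBrkCentral (brk w x) := by
  intro u v
  have h := brk_jacobi w x (brk u v)
  have h₁ := hw x (brk u v)
  have h₂ := congrArg (brk · x) (hw u v)
  simp only [brk, mul_sub, sub_mul, zero_mul, mul_zero] at h h₁ h₂ ⊢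
  linear_combination (norm := abel) h + h₁ + h₂

lemma IsBrkCentral.foldl_brk_perm {w : R} (hw : IsBrkCentral w) {l l' : List R}
    (h : l.Perm l') : l.foldl brk w = l'.foldl brk w := by
  induction h generalizing w with
  | nil => rfl
  | cons x _ ih => exact ih (hw.isBrkCentral_brk x)
  | swap x y l => simp only [List.foldl_cons, hw.brk_brk_comm]
  | trans _ _ ih₁ ih₂ => exact (ih₁ hw).trans (ih₂ hw)

lemma assoc'_brk_teichmuller (x y z w : R) :
    assoc' (brk x y) z w - assoc' (brk y z) x w + assoc' (brk z w) x y =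
      brk x (assoc' y z w) - brk w (assoc' x y z) := by
  have h₁ := assoc'_teichmuller x y z w
  have h₂ := assoc'_teichmuller w z y x
  simp only [brk, assoc'_sub_left]
  simp only [assoc_swap_left, assoc_swap_right] at h₁ h₂ ⊢
  linear_combination (norm := abel) h₁ - h₂

variable [IsAddTorsionFree R]

lemma assoc'_brk_eq_zero (x y z w : R) : assoc' (brk x y) z w = 0 := by
  have key : 4 • assoc' (brk x y) z w = 0 := by
    have h₁ := assoc'_brk_teichmuller x y z w
    have h₂ := assoc'_brk_teichmuller x y w z
    have h₃ := assoc'_brk_teichmuller y x z w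
    have h₄ := assoc'_brk_teichmuller y x w z
    have h₅ := assoc'_brk_teichmuller x z w y
    have h₆ := assoc'_brk_teichmuller x w z y
    simp only [brk, assoc'_sub_left] at h₁ h₂ h₃ h₄ h₅ h₆ ⊢
    simp only [assoc_swap_left, assoc_swap_right] at h₁ h₂ h₃ h₄ h₅ h₆ ⊢
    linear_combination (norm := abel) h₁ + h₂ - h₃ - h₄ - h₅ - h₆
  exact (nsmul_eq_zero_iff_right (by norm_num)).1 key

lemma brk_assoc'_comm (x y z w : R) : brk (assoc' x y z) w = brk (assoc' x y w) z := by
  have h := assoc'_brk_teichmuller z x y w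
  simp only [assoc'_brk_eq_zero, sub_zero, add_zero] at h
  simp only [brk] at h ⊢
  simp only [assoc_swap_left, assoc_swap_right] at h ⊢
  linear_combination (norm := abel) -h

lemma isBrkCentral_assoc' (x y z : R) : IsBrkCentral (assoc' x y z) := by
  intro u v
  calc brk (assoc' x y z) (brk u v)
      = brk (assoc' x y z) (u * v) - brk (assoc' x y z) (v * u) := by
        simp only [brk, mul_sub, sub_mul]; abel
    _ = brk (assoc' x y (u * v)) z - brk (assoc' x y (v * u)) z := by
        rw [brk_assoc'_comm x y z (u * v), brk_assoc'_comm x y z (v * u)]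
    _ = brk (assoc' (brk u v) x y) z := by
        simp only [brk, assoc'_sub_left, sub_mul, mul_sub]
        simp only [assoc_swap_left, assoc_swap_right]
        abel
    _ = 0 := by rw [assoc'_brk_eq_zero, brk, zero_mul, mul_zero, sub_zero]

lemma nestedBrk_append_swap (pre : List R) (x y : R) (l : List R) :
    nestedBrk (pre ++ x :: y :: l) = nestedBrk (pre ++ y :: x :: l) := by
  match pre, l with
  | [], [] => rfl
  | [], z :: l => simp only [nestedBrk, List.nil_append, assoc_swap_left x y z]
  | [p], l => simp only [nestedBrk, List.cons_append, List.nil_append, assoc_swap_right p x y]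
  | [p, q], l =>
    simp only [nestedBrk, List.cons_append, List.nil_append, List.foldl_cons, brk_assoc'_comm]
  | p :: q :: r :: pre, l =>
    exact (isBrkCentral_assoc' p q r).foldl_brk_perm ((List.Perm.swap y x l).append_left pre)

lemma nestedBrk_perm {l l' : List R} (h : l.Perm l') : nestedBrk l = nestedBrk l' := by
  suffices ∀ pre : List R, nestedBrk (pre ++ l) = nestedBrk (pre ++ l') from this []
  induction h with
  | nil => exact fun _ => rfl
  | cons x _ ih => exact fun pre => by simpa using ih (pre ++ [x])
  | swap x y l => exact fun pre => nestedBrk_append_swap pre y x l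
  | trans _ _ ih₁ ih₂ => exact fun pre => (ih₁ pre).trans (ih₂ pre)

end

theorem nestedBrk_perm_invariant_general (K R : Type*) [Field K] [CharZero K]
    [NonUnitalNonAssocRing R] [Module K R]
    [IsAssosymmetric R] (n : ℕ) (a : Fin n → R) (σ : Equiv.Perm (Fin n)) :
    nestedBrk ((List.finRange n).map (a ∘ σ)) = nestedBrk ((List.finRange n).map a) := by
  have := IsAddTorsionFree.of_isTorsionFree K R
  rw [← List.map_map]
  exact nestedBrk_perm (σ.map_finRange_perm.map a)

/-- Lemma 4 (Hentzel–Jacobs–Peresi): in an assosymmetric algebra over a field of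
characteristic `0`, the element `[⋯[[(a₁,a₂,a₃),a₄],a₅],…,aₙ]` is invariant under every
permutation of `a₁, …, aₙ`. -/
theorem nestedBrk_perm_invariant (K R : Type*) [Field K] [CharZero K]
    [NonUnitalNonAssocRing R] [Module K R] [IsScalarTower K R R] [SMulCommClass K R R]
    [IsAssosymmetric R] (n : ℕ) (hn : 3 ≤ n) (a : Fin n → R) (σ : Equiv.Perm (Fin n)) :
    nestedBrk ((List.finRange n).map (a ∘ σ)) = nestedBrk ((List.finRange n).map a) :=
  nestedBrk_perm_invariant_general K R n a σ

end
end
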